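/- arXiv:1705.08466 — 5 statements merged into one kernel-verified Lean document; each statement's English description precedes it below -/
import Mathlib

section
/- For w in the open unit disk with w ≠ 0, the A^1-norm of the Bergman reproducing kernel k_w(z) = 1/(1 - conj(w) z)^2 equals |w|^{-2} · log(1/(1 - |w|^2)); that is, ∫_D |1/(1 - conj(w) z)^2| dA(z) = |w|^{-2} log(1/(1-|w|^2)), where dA is normalized area measure on D. -/
/-!
In polar coordinates the area integral of `|1 - w̄ z|⁻²` over the disk becomes
`2π ∫₀¹ r · (average over |z| = r) dr`. On the circle `|z| = r` the integrand is
`(1 - |w|² r²)⁻¹` times the Poisson kernel at `r² w`, whose average is `1`, so the area integral is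
`2π ∫₀¹ r / (1 - |w|² r²) dr = π |w|⁻² log (1 / (1 - |w|²))`.
-/

open Complex Metric MeasureTheory
open ComplexConjugate Real InnerProductSpace Set

theorem Complex.polarCoord_symm_eq_circleMap (p : ℝ × ℝ) :
    Complex.polarCoord.symm p = circleMap 0 p.1 p.2 := by
  simp [circleMap_zero, Complex.exp_mul_I, Complex.ofReal_cos, Complex.ofReal_sin]

section
variable {E : Type*} [NormedAddCommGroup E] [NormedSpace ℝ E]

theorem setIntegral_Ioo_neg_pi_pi_circleMap (f : ℂ → E) (c : ℂ) (r : ℝ) :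
    ∫ θ in Ioo (-π) π, f (circleMap c r θ) = (2 * π) • circleAverage f c r := by
  rw [circleAverage_eq_integral_add (-π), smul_inv_smul₀ (by positivity),
    intervalIntegral.integral_comp_add_right (fun θ ↦ f (circleMap c r θ)),
    intervalIntegral.integral_of_le (by linarith [pi_pos]), integral_Ioc_eq_integral_Ioo]
  ring_nf

theorem ContinuousOn.integrableOn_smul_circleMap {f : ℂ → E} {R : ℝ}
    (hf : ContinuousOn f (closedBall 0 R)) :
    IntegrableOn (fun p : ℝ × ℝ ↦ p.1 • f (circleMap 0 p.1 p.2)) (Ioo 0 R ×ˢ Ioo (-π) π) := by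
  have hmaps : MapsTo (fun p : ℝ × ℝ ↦ circleMap 0 p.1 p.2) (Icc 0 R ×ˢ Icc (-π) π)
      (closedBall 0 R) := by
    rintro ⟨r, θ⟩ ⟨⟨hr0, hrR⟩, -⟩
    simpa [abs_of_nonneg hr0] using hrR
  have hcont : ContinuousOn (fun p : ℝ × ℝ ↦ p.1 • f (circleMap 0 p.1 p.2))
      (Icc 0 R ×ˢ Icc (-π) π) :=
    continuousOn_fst.smul (hf.comp (by fun_prop) hmaps)
  exact (hcont.integrableOn_compact (isCompact_Icc.prod isCompact_Icc)).mono_set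
    (prod_mono Ioo_subset_Icc_self Ioo_subset_Icc_self)

theorem setIntegral_ball_eq_two_pi_smul_integral_circleAverage [CompleteSpace E]
    {f : ℂ → E} {R : ℝ}    (hf : ContinuousOn f (closedBall 0 R)) (hR : 0 ≤ R) :
    ∫ z in ball 0 R, f z = (2 * π) • ∫ r in 0..R, r • circleAverage f 0 r := by
  set box := Ioo 0 R ×ˢ Ioo (-π) π
  have hpolar : ∀ p ∈ polarCoord.target, p.1 • (ball 0 R).indicator f (Complex.polarCoord.symm p)
      = box.indicator (fun p : ℝ × ℝ ↦ p.1 • f (circleMap 0 p.1 p.2)) p := by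
    rintro ⟨r, θ⟩ ⟨hr, hθ⟩
    simp only [mem_Ioi] at hr
    by_cases hrR : r < R
    · rw [indicator_of_mem (by simpa [abs_of_pos hr] using hrR),
        indicator_of_mem (show (r, θ) ∈ box from ⟨⟨hr, hrR⟩, hθ⟩),
        Complex.polarCoord_symm_eq_circleMap]
    · rw [indicator_of_notMem (by simpa [abs_of_pos hr] using hrR),
        indicator_of_notMem (fun h ↦ hrR h.1.2), smul_zero]
  calc ∫ z in ball 0 R, f z
      = ∫ p in polarCoord.target, p.1 • (ball 0 R).indicator f (Complex.polarCoord.symm p) := by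
        rw [Complex.integral_comp_polarCoord_symm, integral_indicator measurableSet_ball]
    _ = ∫ p in box, p.1 • f (circleMap 0 p.1 p.2) := by
        rw [setIntegral_congr_fun polarCoord.open_target.measurableSet hpolar,
          setIntegral_indicator (measurableSet_Ioo.prod measurableSet_Ioo), polarCoord_target,
          inter_eq_right.2 (prod_mono Ioo_subset_Ioi_self subset_rfl)]
    _ = ∫ r in Ioo 0 R, ∫ θ in Ioo (-π) π, r • f (circleMap 0 r θ) := by
        rw [Measure.volume_eq_prod]
        exact setIntegral_prod _ hf.integrableOn_smul_circleMap
    _ = (2 * π) • ∫ r in 0..R, r • circleAverage f 0 r := by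
        simp_rw [integral_smul, setIntegral_Ioo_neg_pi_pi_circleMap, smul_comm _ (2 * π)]
        rw [integral_smul, intervalIntegral.integral_of_le hR, integral_Ioc_eq_integral_Ioo]
end

theorem circleAverage_poissonKernel {c w : ℂ} {R : ℝ} (hw : w ∈ ball c R) :
    circleAverage (poissonKernel c w) c R = 1 := by
  simpa [← Pi.one_def] using
    (harmonicContOnCl_const (c := (1 : ℝ))).circleAverage_poissonKernel_smul hw

theorem norm_one_sub_mul_of_norm_eq_one (a : ℂ) {z : ℂ} (hz : ‖z‖ = 1) :
    ‖1 - a * z‖ = ‖z - conj a‖ := by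
  have hzz : z * conj z = 1 := by
    rw [mul_conj, normSq_eq_norm_sq, hz]; norm_num
  calc ‖1 - a * z‖ = ‖z * (conj z - a)‖ := by rw [mul_sub, hzz]; ring_nf
    _ = ‖z - conj a‖ := by rw [norm_mul, hz, one_mul, ← norm_conj, map_sub, conj_conj]

theorem circleAverage_inv_norm_one_sub_mul_sq {b : ℂ} {r : ℝ} (h : ‖b‖ * |r| < 1) :
    circleAverage (fun z ↦ (‖1 - b * z‖ ^ 2)⁻¹) 0 r = (1 - ‖b‖ ^ 2 * r ^ 2)⁻¹ := by
  set a := b * r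
  have ha : ‖a‖ < 1 := by simpa [a] using h
  have hconj : conj a ∈ ball (0 : ℂ) 1 := by simpa using ha
  have hsphere : Set.EqOn (fun z ↦ (‖1 - b * (r * z + 0)‖ ^ 2)⁻¹)
      (fun z ↦ (1 - ‖a‖ ^ 2)⁻¹ • poissonKernel 0 (conj a) z) (sphere 0 |1|) := by
    intro z hz
    have hz : ‖z‖ = 1 := by simpa using hz
    have hne : 1 - ‖a‖ ^ 2 ≠ 0 := by nlinarith [norm_nonneg a]
    simp only [add_zero, ← mul_assoc, poissonKernel, sub_zero, norm_conj, hz]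
    rw [norm_one_sub_mul_of_norm_eq_one a hz, smul_eq_mul, one_pow, ← mul_div_assoc,
      inv_mul_cancel₀ hne, one_div]
  rw [circleAverage_eq_circleAverage_zero_one, circleAverage_congr_sphere hsphere,
    circleAverage_fun_smul, circleAverage_poissonKernel hconj]
  simp [a, mul_pow]

theorem integral_mul_inv_one_sub_mul_sq {s : ℝ} (hs : s < 1) (hs0 : s ≠ 0) :
    ∫ r in (0 : ℝ)..1, r * (1 - s * r ^ 2)⁻¹ = (2 * s)⁻¹ * Real.log (1 / (1 - s)) := by
  have hpos : ∀ r ∈ uIcc (0 : ℝ) 1, 0 < 1 - s * r ^ 2 := by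
    intro r hr
    rw [uIcc_of_le zero_le_one] at hr
    have hr2 : r ^ 2 ≤ 1 := pow_le_one₀ hr.1 hr.2
    rcases le_or_gt s 0 with h | h <;> nlinarith [sq_nonneg r]
  have hderiv : ∀ r ∈ uIcc (0 : ℝ) 1,
      HasDerivAt (fun r ↦ -(2 * s)⁻¹ * Real.log (1 - s * r ^ 2)) (r * (1 - s * r ^ 2)⁻¹) r := by
    intro r hr
    refine (((((hasDerivAt_pow 2 r).const_mul s).const_sub 1).log (hpos r hr).ne').const_mul
      (-(2 * s)⁻¹)).congr_deriv ?_
    have := (hpos r hr).ne'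
    field_simp
    ring
  have hint : IntervalIntegrable (fun r : ℝ ↦ r * (1 - s * r ^ 2)⁻¹) volume 0 1 :=
    (continuousOn_id.mul
      (ContinuousOn.inv₀ (by fun_prop) fun r hr ↦ (hpos r hr).ne')).intervalIntegrable
  rw [intervalIntegral.integral_eq_sub_of_hasDerivAt hderiv hint, one_div, Real.log_inv]
  simp

/-- For `w` in the open unit disk, `w ≠ 0`, the `A¹`-norm of the Bergman kernel
`k_w(z) = (1 - conj w * z)⁻²` with respect to normalized area measure equals
`|w|⁻² * log (1/(1-|w|²))`. -/
theorem bergman_kernel_A1_norm (w : ℂ) (hw : w ∈ ball (0 : ℂ) 1) (hw0 : w ≠ 0) :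
    (Real.pi)⁻¹ * ∫ z in ball (0 : ℂ) 1, ‖(1 / (1 - (starRingEnd ℂ) w * z) ^ 2)‖
      = ‖w‖⁻¹ ^ 2 * Real.log (1 / (1 - ‖w‖ ^ 2)) := by
  have hw1 : ‖w‖ < 1 := mem_ball_zero_iff.1 hw
  have hkernel : (fun z ↦ ‖(1 / (1 - conj w * z) ^ 2)‖) = fun z ↦ (‖1 - conj w * z‖ ^ 2)⁻¹ := by
    simp
  have hcont : ContinuousOn (fun z ↦ (‖1 - conj w * z‖ ^ 2)⁻¹) (closedBall 0 1) := by
    refine ContinuousOn.inv₀ (by fun_prop) fun z hz ↦ ?_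
    have hz : ‖z‖ ≤ 1 := mem_closedBall_zero_iff.1 hz
    have hlt : ‖conj w * z‖ < 1 := by
      rw [norm_mul, norm_conj]
      nlinarith [mul_le_mul_of_nonneg_left hz (norm_nonneg w)]
    have : 0 < ‖1 - conj w * z‖ :=
      (sub_pos.2 hlt).trans_le (by simpa using norm_sub_norm_le 1 (conj w * z))
    positivity
  have hradial : EqOn (fun r : ℝ ↦ r • circleAverage (fun z ↦ (‖1 - conj w * z‖ ^ 2)⁻¹) 0 r)
      (fun r ↦ r * (1 - ‖w‖ ^ 2 * r ^ 2)⁻¹) (uIcc 0 1) := by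
    intro r hr
    rw [uIcc_of_le zero_le_one] at hr
    have hr1 : ‖conj w‖ * |r| < 1 := by
      rw [norm_conj, abs_of_nonneg hr.1]
      nlinarith [hr.2, norm_nonneg w]
    simp only [circleAverage_inv_norm_one_sub_mul_sq hr1, norm_conj, smul_eq_mul]
  rw [hkernel, setIntegral_ball_eq_two_pi_smul_integral_circleAverage hcont zero_le_one,
    intervalIntegral.integral_congr hradial,
    integral_mul_inv_one_sub_mul_sq (by nlinarith [norm_nonneg w]) (by positivity), smul_eq_mul]
  field_simp
end

section
/- Let (n_k)_{k≥1} be a sequence of integers with n_1 ≥ 2 and suppose there exist α > 1 and β > 1 with n_k^α ≤ n_{k+1} ≤ n_k^{αβ} for all k. Then there exists a constant C > 0, depending only on α and β, such that Σ_{k=1}^∞ (log n_k) r^{n_k} ≤ C log(e/(1-r)) for all 0 ≤ r < 1. -/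
private lemma geomAux {x : ℝ} (h0 : 0 ≤ x) (h1 : x < 1) (n : ℕ) :
    ∑ i ∈ Finset.range n, x ^ i ≤ (1 - x)⁻¹ := by
  have h := Summable.sum_le_tsum (Finset.range n) (fun i _ => pow_nonneg h0 i)
    (summable_geometric_of_lt_one h0 h1)
  rwa [tsum_geometric_of_lt_one h0 h1] at h

private lemma expAux {t : ℝ} (ht : 0 ≤ t) : (t + 1) * Real.exp (-t) ≤ 2 * Real.exp (-(t/2)) := by
  have h1 : t/2 + 1 ≤ Real.exp (t/2) := Real.add_one_le_exp _
  have h2 : 0 < Real.exp (t/2) := Real.exp_pos _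
  have h3 : Real.exp (-t) = Real.exp (-(t/2)) * Real.exp (-(t/2)) := by
    rw [← Real.exp_add]; ring_nf
  have h4 : Real.exp (-(t/2)) = (Real.exp (t/2))⁻¹ := by
    rw [← Real.exp_neg]
  have h5 : (t + 1) * (Real.exp (t/2))⁻¹ ≤ 2 := by
    rw [mul_inv_le_iff₀ h2]
    nlinarith
  calc (t + 1) * Real.exp (-t) = ((t+1) * (Real.exp (t/2))⁻¹) * Real.exp (-(t/2)) := by
        rw [h3, h4]; ring
    _ ≤ 2 * Real.exp (-(t/2)) :=
        mul_le_mul_of_nonneg_right h5 (Real.exp_nonneg _)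

set_option maxHeartbeats 1600000 in
/-- If `n_k^α ≤ n_{k+1} ≤ n_k^{αβ}` with `α, β > 1`, then there is `C > 0`, depending
only on `α` and `β`, with `Σ_k (log n_k) r^{n_k} ≤ C log(e/(1-r))` for `0 ≤ r < 1`. -/
theorem lacunary_log_sum_bound (α β : ℝ) (hα : 1 < α) (hβ : 1 < β) :
    ∃ C : ℝ, 0 < C ∧ ∀ n : ℕ → ℕ, 2 ≤ n 0 →
      (∀ k, ((n k : ℝ)) ^ α ≤ (n (k + 1) : ℝ) ∧ (n (k + 1) : ℝ) ≤ ((n k : ℝ)) ^ (α * β)) →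
      ∀ r : ℝ, 0 ≤ r → r < 1 →
        (∑' k : ℕ, Real.log (n k) * r ^ n k) ≤ C * Real.log (Real.exp 1 / (1 - r)) := by
  classical
  have hlog2 : 0 < Real.log 2 := Real.log_pos (by norm_num)
  set q : ℝ := Real.exp (-((α - 1) * Real.log 2 / 2)) with hqdef
  have hq0 : 0 < q := Real.exp_pos _
  have hq1 : q < 1 := by
    rw [hqdef, Real.exp_lt_one_iff]
    nlinarith
  have hαinv : (0:ℝ) < 1 - α⁻¹ := by
    have : α⁻¹ < 1 := inv_lt_one_of_one_lt₀ hα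
    linarith
  have h1q : (0:ℝ) < 1 - q := by linarith
  refine ⟨(1 - α⁻¹)⁻¹ + 2 / (1 - q),
    add_pos (inv_pos.mpr hαinv) (div_pos two_pos h1q), ?_⟩
  intro n hn0 hstep r hr0 hr1
  have h1r : (0:ℝ) < 1 - r := by linarith
  set L : ℝ := Real.log (Real.exp 1 / (1 - r)) with hLdef
  have hLeq : L = 1 - Real.log (1 - r) := by
    rw [hLdef, Real.log_div (Real.exp_ne_zero 1) (ne_of_gt h1r), Real.log_exp]
  have hL1 : 1 ≤ L := by
    have : Real.log (1 - r) ≤ 0 := Real.log_nonpos (by linarith) (by linarith)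
    rw [hLeq]; linarith
  have hL0 : 0 < L := lt_of_lt_of_le one_pos hL1
  -- n k ≥ 2
  have hn2 : ∀ k, (2:ℝ) ≤ (n k : ℝ) := by
    intro k
    induction k with
    | zero => exact_mod_cast hn0
    | succ k ih =>
        have h1 : (1:ℝ) ≤ (n k : ℝ) := by linarith
        calc (2:ℝ) ≤ (n k : ℝ) := ih
          _ = (n k : ℝ) ^ (1:ℝ) := (Real.rpow_one _).symm
          _ ≤ (n k : ℝ) ^ α := Real.rpow_le_rpow_of_exponent_le h1 hα.le
          _ ≤ (n (k+1) : ℝ) := (hstep k).1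
  have hnpos : ∀ k, (0:ℝ) < (n k : ℝ) := fun k => lt_of_lt_of_le two_pos (hn2 k)
  -- strict monotonicity
  have hmono : StrictMono n := by
    apply strictMono_nat_of_lt_succ
    intro k
    have h1 : (1:ℝ) < (n k : ℝ) := lt_of_lt_of_le one_lt_two (hn2 k)
    have : (n k : ℝ) < (n (k+1) : ℝ) := by
      calc (n k : ℝ) = (n k : ℝ) ^ (1:ℝ) := (Real.rpow_one _).symm
        _ < (n k : ℝ) ^ α := Real.rpow_lt_rpow_of_exponent_lt h1 hα
        _ ≤ (n (k+1) : ℝ) := (hstep k).1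
    exact_mod_cast this
  have hmonole : ∀ {a b : ℕ}, a ≤ b → (n a : ℝ) ≤ (n b : ℝ) := by
    intro a b hab; exact_mod_cast hmono.monotone hab
  -- summability
  have hterm_nonneg : ∀ k, 0 ≤ Real.log (n k) * r ^ n k := fun k =>
    mul_nonneg (Real.log_nonneg (by linarith [hn2 k])) (pow_nonneg hr0 _)
  have hsum : Summable (fun k => Real.log (n k) * r ^ n k) := by
    have h1 : Summable (fun m : ℕ => (m:ℝ) * r ^ m) := by
      have := summable_pow_mul_geometric_of_norm_lt_one (R := ℝ) 1
        (r := r) (by rwa [Real.norm_eq_abs, abs_of_nonneg hr0])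
      simpa using this
    have h2 : Summable (fun k => ((n k : ℝ)) * r ^ (n k)) :=
      h1.comp_injective hmono.injective
    refine Summable.of_nonneg_of_le hterm_nonneg (fun k => ?_) h2
    exact mul_le_mul_of_nonneg_right (Real.log_le_self (hnpos k).le) (pow_nonneg hr0 _)
  -- log n_{k+1} ≥ α log n_k, iterated
  have hlogstep : ∀ k, α * Real.log (n k) ≤ Real.log (n (k+1)) := by
    intro k
    have h := Real.log_le_log (Real.rpow_pos_of_pos (hnpos k) α) (hstep k).1
    rwa [Real.log_rpow (hnpos k)] at h
  have hlogiter : ∀ m k, α ^ m * Real.log (n k) ≤ Real.log (n (k + m)) := by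
    intro m
    induction m with
    | zero => intro k; simp
    | succ m ih =>
        intro k
        have h1 := ih (k+1)
        have h2 : α ^ m * (α * Real.log (n k)) ≤ α ^ m * Real.log (n (k+1)) :=
          mul_le_mul_of_nonneg_left (hlogstep k) (pow_nonneg (by linarith) m)
        calc α ^ (m+1) * Real.log (n k) = α ^ m * (α * Real.log (n k)) := by ring
          _ ≤ α ^ m * Real.log (n (k+1)) := h2
          _ ≤ Real.log (n (k+1+m)) := h1
          _ = Real.log (n (k+(m+1))) := by ring_nf
  -- n_{k+m} ≥ n_k ^ (α^m)
  have hrpowiter : ∀ m k, ((n k : ℝ)) ^ (α ^ m : ℝ) ≤ (n (k + m) : ℝ) := by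
    intro m
    induction m with
    | zero => intro k; simp
    | succ m ih =>
        intro k
        have h1 : ((n k : ℝ)) ^ (α ^ (m+1) : ℝ) = (((n k : ℝ)) ^ (α ^ m : ℝ)) ^ α := by
          rw [pow_succ, Real.rpow_mul (Nat.cast_nonneg _)]
        rw [h1]
        calc (((n k : ℝ)) ^ (α ^ m : ℝ)) ^ α ≤ ((n (k+m) : ℝ)) ^ α :=
              Real.rpow_le_rpow (Real.rpow_nonneg (Nat.cast_nonneg _) _) (ih k) (by linarith)
          _ ≤ (n (k+m+1) : ℝ) := (hstep (k+m)).1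
          _ = (n (k+(m+1)) : ℝ) := by ring_nf
  -- main: bound every finite partial sum
  apply Summable.tsum_le_of_sum_le hsum
  intro s
  set P : ℕ → Prop := fun k => (n k : ℝ) * (1 - r) ≤ 1 with hPdef
  rw [← Finset.sum_filter_add_sum_filter_not s P]
  have headbound : ∑ k ∈ s.filter P, Real.log (n k) * r ^ n k ≤ (1 - α⁻¹)⁻¹ * L := by
    rcases (s.filter P).eq_empty_or_nonempty with he | hne
    · rw [he, Finset.sum_empty]
      exact le_of_lt (mul_pos (inv_pos.mpr hαinv) hL0)
    · set K := (s.filter P).max' hne with hKdef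
      have hKmem : K ∈ s.filter P := (s.filter P).max'_mem hne
      have hKmax : ∀ x ∈ s.filter P, x ≤ K := fun x hx => Finset.le_max' _ _ hx
      clear_value K
      have hPK : (n K : ℝ) * (1 - r) ≤ 1 := (Finset.mem_filter.mp hKmem).2
      have hsub : s.filter P ⊆ Finset.range (K+1) := by
        intro k hk
        exact Finset.mem_range.mpr (Nat.lt_succ_of_le (hKmax _ hk))
      have hlogK_nonneg : 0 ≤ Real.log (n K) := Real.log_nonneg (by linarith [hn2 K])
      have hlogKL : Real.log (n K) ≤ L := by
        have h1 : (n K : ℝ) ≤ (1 - r)⁻¹ := by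
          calc (n K : ℝ) = ((n K : ℝ) * (1 - r)) * (1 - r)⁻¹ := by field_simp
            _ ≤ 1 * (1 - r)⁻¹ :=
                mul_le_mul_of_nonneg_right hPK (by positivity)
            _ = (1 - r)⁻¹ := one_mul _
        have h2 : Real.log (n K) ≤ Real.log ((1-r)⁻¹) := Real.log_le_log (hnpos K) h1
        rw [Real.log_inv] at h2
        rw [hLeq]; linarith
      calc ∑ k ∈ s.filter P, Real.log (n k) * r ^ n k
          ≤ ∑ k ∈ Finset.range (K+1), Real.log (n k) * r ^ n k :=
            Finset.sum_le_sum_of_subset_of_nonneg hsub (fun k _ _ => hterm_nonneg k)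
        _ ≤ ∑ k ∈ Finset.range (K+1), (α⁻¹) ^ (K - k) * Real.log (n K) := by
            apply Finset.sum_le_sum
            intro k hk
            have hkK : k ≤ K := Nat.lt_succ_iff.mp (Finset.mem_range.mp hk)
            have h1 : Real.log (n k) * r ^ n k ≤ Real.log (n k) := by
              apply mul_le_of_le_one_right (Real.log_nonneg (by linarith [hn2 k]))
              exact pow_le_one₀ hr0 hr1.le
            have h2 : α ^ (K - k) * Real.log (n k) ≤ Real.log (n K) := by
              have := hlogiter (K - k) k
              rwa [Nat.add_sub_cancel' hkK] at this
            have hαpow : (0:ℝ) < α ^ (K - k) := pow_pos (by linarith) _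
            have h3 : Real.log (n k) ≤ (α⁻¹) ^ (K - k) * Real.log (n K) := by
              rw [inv_pow, inv_mul_eq_div, le_div_iff₀ hαpow]
              linarith [h2]
            linarith
        _ = ∑ j ∈ Finset.range (K+1), (α⁻¹) ^ j * Real.log (n K) := by
            rw [← Finset.sum_range_reflect]
            apply Finset.sum_congr rfl
            intro j hj
            have hj' := Finset.mem_range.mp hj
            congr 2
            omega
        _ = (∑ j ∈ Finset.range (K+1), (α⁻¹) ^ j) * Real.log (n K) := by
            rw [Finset.sum_mul]
        _ ≤ (1 - α⁻¹)⁻¹ * L := by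
            apply mul_le_mul _ hlogKL hlogK_nonneg (le_of_lt (inv_pos.mpr hαinv))
            exact geomAux (by positivity) (by linarith) _
  have tailbound : ∑ k ∈ s.filter (fun k => ¬ P k), Real.log (n k) * r ^ n k
      ≤ (2 / (1 - q)) * L := by
    rcases (s.filter fun k => ¬ P k).eq_empty_or_nonempty with he | hne
    · rw [he, Finset.sum_empty]
      exact le_of_lt (mul_pos (div_pos two_pos h1q) hL0)
    · set k₀ := (s.filter fun k => ¬ P k).min' hne with hk0def
      set K' := (s.filter fun k => ¬ P k).max' hne with hK'def
      have hk0mem : k₀ ∈ s.filter fun k => ¬ P k := (s.filter fun k => ¬ P k).min'_mem hne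
      have hk0min : ∀ x ∈ s.filter (fun k => ¬ P k), k₀ ≤ x :=
        fun x hx => Finset.min'_le _ _ hx
      have hK'max : ∀ x ∈ s.filter (fun k => ¬ P k), x ≤ K' :=
        fun x hx => Finset.le_max' _ _ hx
      clear_value k₀ K'
      have hPk0 : 1 < (n k₀ : ℝ) * (1 - r) :=
        not_le.mp (Finset.mem_filter.mp hk0mem).2
      -- per-element bound
      have key : ∀ k, k₀ ≤ k → Real.log (n k) * r ^ n k ≤ 2 * L * q ^ (k - k₀) := by
        intro k hk
        obtain ⟨j, hkj⟩ : ∃ j, k = k₀ + j := ⟨k - k₀, by omega⟩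
        have hjk : k - k₀ = j := by omega
        obtain ⟨t, htdef⟩ : ∃ t : ℝ, t = (n k : ℝ) * (1 - r) := ⟨_, rfl⟩
        have ht1 : 1 < t := by
          rw [htdef]
          exact lt_of_lt_of_le hPk0 (mul_le_mul_of_nonneg_right (hmonole hk) h1r.le)
        have ht0 : 0 < t := lt_trans one_pos ht1
        -- r ^ n k ≤ exp (-t)
        have hre : r ^ n k ≤ Real.exp (-t) := by
          have h1 : r ≤ Real.exp (-(1-r)) := by
            have := Real.add_one_le_exp (r - 1)
            have he : Real.exp (r-1) = Real.exp (-(1-r)) := by ring_nf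
            linarith [this, he.le, he.ge]
          calc r ^ n k ≤ (Real.exp (-(1-r))) ^ n k := pow_le_pow_left₀ hr0 h1 _
            _ = Real.exp ((n k : ℝ) * (-(1-r))) := by rw [Real.exp_nat_mul]
            _ = Real.exp (-t) := by rw [htdef]; ring_nf
        -- log n k ≤ t + L
        have hlt : Real.log (n k) ≤ t + L := by
          have h1 : Real.log (n k) = Real.log t - Real.log (1 - r) := by
            rw [htdef, Real.log_mul (ne_of_gt (hnpos k)) (ne_of_gt h1r)]
            ring
          have h2 : Real.log t ≤ t - 1 := Real.log_le_sub_one_of_pos ht0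
          rw [h1, hLeq] at *
          linarith
        -- combine: term ≤ 2 L exp(-t/2)
        have hcomb : Real.log (n k) * r ^ n k ≤ 2 * L * Real.exp (-(t/2)) := by
          calc Real.log (n k) * r ^ n k ≤ (t + L) * Real.exp (-t) := by
                apply mul_le_mul hlt hre (pow_nonneg hr0 _)
                linarith
            _ ≤ L * ((t + 1) * Real.exp (-t)) := by
                have h1 : t + L ≤ L * (t + 1) := by nlinarith
                have h2 : (0:ℝ) ≤ Real.exp (-t) := Real.exp_nonneg _
                nlinarith
            _ ≤ L * (2 * Real.exp (-(t/2))) :=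
                mul_le_mul_of_nonneg_left (expAux ht0.le) hL0.le
            _ = 2 * L * Real.exp (-(t/2)) := by ring
        -- t ≥ j (α-1) log 2
        have hab : (j:ℝ) * ((α - 1) * Real.log 2) ≤ t := by
          obtain ⟨A, hA⟩ : ∃ A : ℝ, A = (α ^ j : ℝ) := ⟨_, rfl⟩
          have hBern : 1 + (j:ℝ) * (α - 1) ≤ A := by
            have h := one_add_mul_le_pow (a := α - 1) (by linarith) j
            have h' : (1 + (α - 1)) ^ j = α ^ j := by ring_nf
            rw [hA]; linarith [h, h'.le, h'.ge]
          have hA1 : (1:ℝ) ≤ A := by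
            have : (0:ℝ) ≤ (j:ℝ) * (α - 1) := by
              apply mul_nonneg (Nat.cast_nonneg _); linarith
            linarith
          have hn1 : (1:ℝ) ≤ (n k₀ : ℝ) := by linarith [hn2 k₀]
          have h1 : ((n k₀ : ℝ)) ^ A ≤ (n k : ℝ) := by
            rw [hA, hkj]; exact hrpowiter j k₀
          obtain ⟨u, hu⟩ : ∃ u : ℝ, u = ((n k₀:ℝ)) ^ (A - 1) := ⟨_, rfl⟩
          have hupos : 0 < u := by rw [hu]; exact Real.rpow_pos_of_pos (hnpos k₀) _
          have heq2 : ((n k₀:ℝ)) ^ A = u * (n k₀:ℝ) := by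
            rw [hu]
            have h := Real.rpow_add (hnpos k₀) (A - 1) 1
            rw [Real.rpow_one] at h
            have h' : A - 1 + 1 = A := by ring
            rw [h'] at h
            exact h
          have h2 : u ≤ t := by
            have hx : u * ((n k₀:ℝ) * (1 - r)) ≤ t := by
              rw [htdef]
              calc u * ((n k₀:ℝ) * (1 - r)) = (((n k₀:ℝ)) ^ A) * (1 - r) := by
                    rw [heq2]; ring
                _ ≤ (n k : ℝ) * (1 - r) := mul_le_mul_of_nonneg_right h1 h1r.le
            nlinarith [hPk0, hupos, hx]
          obtain ⟨v, hv⟩ : ∃ v : ℝ, v = (2:ℝ) ^ (A - 1) := ⟨_, rfl⟩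
          have h4 : v ≤ u := by
            rw [hu, hv]
            exact Real.rpow_le_rpow (by norm_num) (hn2 k₀) (by linarith)
          have h5 : (A - 1) * Real.log 2 ≤ v := by
            rw [hv, Real.rpow_def_of_pos (by norm_num : (0:ℝ) < 2)]
            have h := Real.add_one_le_exp (Real.log 2 * (A - 1))
            nlinarith [h]
          have h7 : (j:ℝ) * (α - 1) * Real.log 2 ≤ (A - 1) * Real.log 2 :=
            mul_le_mul_of_nonneg_right (by linarith) hlog2.le
          nlinarith [h7, h5, h4, h2]
        have hexpq : Real.exp (-(t/2)) ≤ q ^ j := by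
          have h1 : -(t/2) ≤ (j:ℝ) * (-((α - 1) * Real.log 2 / 2)) := by nlinarith [hab]
          calc Real.exp (-(t/2)) ≤ Real.exp ((j:ℝ) * (-((α - 1) * Real.log 2 / 2))) :=
              Real.exp_le_exp.mpr h1
            _ = q ^ j := by rw [Real.exp_nat_mul]
        rw [hjk]
        calc Real.log (n k) * r ^ n k ≤ 2 * L * Real.exp (-(t/2)) := hcomb
          _ ≤ 2 * L * q ^ j := by
              apply mul_le_mul_of_nonneg_left hexpq (by positivity)
      have hsub : (s.filter fun k => ¬ P k) ⊆ Finset.Ico k₀ (K' + 1) := by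
        intro k hk
        rw [Finset.mem_Ico]
        exact ⟨hk0min _ hk, Nat.lt_succ_of_le (hK'max _ hk)⟩
      calc ∑ k ∈ s.filter (fun k => ¬ P k), Real.log (n k) * r ^ n k
          ≤ ∑ k ∈ s.filter (fun k => ¬ P k), 2 * L * q ^ (k - k₀) := by
            apply Finset.sum_le_sum
            intro k hk
            exact key k (hk0min _ hk)
        _ ≤ ∑ k ∈ Finset.Ico k₀ (K' + 1), 2 * L * q ^ (k - k₀) := by
            apply Finset.sum_le_sum_of_subset_of_nonneg hsub
            intro k _ _; positivity
        _ = ∑ i ∈ Finset.range (K' + 1 - k₀), 2 * L * q ^ i := by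
            rw [Finset.sum_Ico_eq_sum_range]
            apply Finset.sum_congr rfl
            intro i _
            congr 2
            omega
        _ = 2 * L * ∑ i ∈ Finset.range (K' + 1 - k₀), q ^ i := by
            rw [Finset.mul_sum]
        _ ≤ 2 * L * (1 - q)⁻¹ := by
            apply mul_le_mul_of_nonneg_left (geomAux hq0.le hq1 _) (by positivity)
        _ = (2 / (1 - q)) * L := by ring
  calc ∑ k ∈ s.filter P, Real.log (n k) * r ^ n k
        + ∑ k ∈ s.filter (fun k => ¬ P k), Real.log (n k) * r ^ n k
      ≤ (1 - α⁻¹)⁻¹ * L + (2 / (1 - q)) * L := add_le_add headbound tailbound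
    _ = ((1 - α⁻¹)⁻¹ + 2 / (1 - q)) * L := by ring
end

section
/- Let f(z) = Σ_{k≥0} a_k z^{n_k} where there exist α > 1, β > 1 with n_k^α ≤ n_{k+1} ≤ n_k^{αβ} for all k, and suppose lim_{k→∞} |a_k|/log(n_k) = 0. Then f is analytic on the unit disk and lim_{|z|→1^-} |f(z)|/log(e/(1-|z|)) = 0. -/
/-!
Write `L_k = log n_k`, `r = 1 - t` and `X = log (e / t)`. The gap condition gives
`L_{k+1} ≥ α L_k` and `n_{k+1} ≥ 2^{α-1} n_k`. Split `∑ L_k r^{n_k}` at the first index `K` with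
`t n_K > 1`: the earlier terms are at most `L_k`, which decay geometrically backwards from
`L_{K-1} ≤ X`; the later ones are at most `2 X / (t n_k)`, which decay geometrically forwards.
So `∑ L_k r^{n_k} ≤ C X`. As `|a_k| ≤ ε L_k` for all but finitely many `k`, this gives
`∑ |a_k| r^{n_k} ≤ A_ε + ε C X`; the same domination gives convergence on the unit disk.
-/

open Metric Filter Finset Real

section Geometric

variable {f : ℕ → ℝ} {c : ℝ}

lemma pow_mul_le_add_of_mul_le_succ (hc : 0 ≤ c) (h : ∀ k, c * f k ≤ f (k + 1)) (k j : ℕ) :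
    c ^ j * f k ≤ f (k + j) := by
  induction j with
  | zero => simp
  | succ j ih =>
    calc c ^ (j + 1) * f k = c * (c ^ j * f k) := by ring
      _ ≤ c * f (k + j) := mul_le_mul_of_nonneg_left ih hc
      _ ≤ f (k + j + 1) := h _

lemma sum_range_succ_le_of_mul_le_succ (hc : 1 < c) (hf : ∀ k, 0 ≤ f k)
    (h : ∀ k, c * f k ≤ f (k + 1)) (K : ℕ) :
    ∑ k ∈ range (K + 1), f k ≤ c / (c - 1) * f K := by
  have hc' : 0 < c - 1 := by linarith
  induction K with
  | zero =>
    rw [sum_range_one, div_mul_eq_mul_div, le_div_iff₀ hc']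
    nlinarith [hf 0]
  | succ K ih =>
    rw [sum_range_succ]
    have hK : c / (c - 1) * f K ≤ f (K + 1) / (c - 1) := by
      rw [div_mul_eq_mul_div]; gcongr; exact h K
    calc ∑ k ∈ range (K + 1), f k + f (K + 1) ≤ f (K + 1) / (c - 1) + f (K + 1) := by
          linarith
      _ = c / (c - 1) * f (K + 1) := by field_simp; ring

end Geometric

lemma log_exp_one_div (t : ℝ) (ht : t ≠ 0) : log (exp 1 / t) = 1 - log t := by
  rw [log_div (exp_pos 1).ne' ht, log_exp]

lemma one_le_log_exp_one_div {t : ℝ} (ht0 : 0 < t) (ht1 : t ≤ 1) : 1 ≤ log (exp 1 / t) := by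
  rw [log_exp_one_div t ht0.ne']
  linarith [log_nonpos ht0.le ht1]

lemma lt_log_exp_one_div_one_sub {M r : ℝ} (hr : 1 - exp (1 - M) < r) (hr1 : r < 1) :
    M < log (exp 1 / (1 - r)) := by
  rw [log_exp_one_div _ (by linarith), lt_sub_comm, ← exp_lt_exp, exp_log (by linarith)]
  linarith

lemma log_le_log_exp_one_div {t x : ℝ} (ht : 0 < t) (hx : 0 < x) (htx : t * x ≤ 1) :
    log x ≤ log (exp 1 / t) := by
  rw [log_exp_one_div t ht.ne']
  have : log x + log t ≤ 0 := by
    rw [← log_mul hx.ne' ht.ne']; exact log_nonpos (by positivity) (by linarith)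
  linarith

/-- With `u = t m ≥ 1` and `X = log (e / t)`: `log m ≤ X u`, `(1 - t) ^ m ≤ e ^ (-u)` and
`u e ^ (-u) ≤ 2 / u`. -/
lemma log_mul_one_sub_pow_le {t : ℝ} {m : ℕ} (ht0 : 0 < t) (ht1 : t ≤ 1) (hm : 1 ≤ t * m) :
    log m * (1 - t) ^ m ≤ 2 * log (exp 1 / t) / (t * m) := by
  set u := t * m
  set X := log (exp 1 / t) with hX_def
  have hu : 0 < u := by linarith
  have hX : 1 ≤ X := one_le_log_exp_one_div ht0 ht1
  have hlog : log m ≤ X * u := by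
    have hm0 : (0 : ℝ) < m := pos_of_mul_pos_right (by linarith : 0 < u) ht0.le
    have : log m = log u + (X - 1) := by
      rw [log_mul ht0.ne' hm0.ne', hX_def, log_exp_one_div t ht0.ne']; ring
    nlinarith [log_le_sub_one_of_pos hu]
  have hpow : (1 - t) ^ m ≤ exp (-u) := by
    calc (1 - t) ^ m ≤ exp (-t) ^ m :=
          pow_le_pow_left₀ (by linarith) (by linarith [one_sub_le_exp_neg t]) m
      _ = exp (-u) := by rw [← exp_nat_mul, mul_neg, mul_comm]
  have hexp : u ^ 2 ≤ 2 * exp u := by nlinarith [quadratic_le_exp_of_nonneg hu.le]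
  have hlog0 : 0 ≤ log m := log_natCast_nonneg m
  rw [le_div_iff₀ hu]
  calc log m * (1 - t) ^ m * u ≤ X * u * exp (-u) * u := by gcongr
    _ = X * (u ^ 2 * exp (-u)) := by ring
    _ ≤ X * (2 * exp u * exp (-u)) := by gcongr
    _ = 2 * X := by rw [mul_assoc, ← exp_add, add_neg_cancel, exp_zero]; ring

section Lacunary

variable {n : ℕ → ℕ} {α : ℝ}

lemma mul_log_le_log_succ (hn2 : ∀ k, 2 ≤ n k) (hgap : ∀ k, (n k : ℝ) ^ α ≤ n (k + 1))
    (k : ℕ) : α * log (n k) ≤ log (n (k + 1)) := by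
  have hpos : (0 : ℝ) < n k := by have := hn2 k; positivity
  rw [← log_rpow hpos]
  exact log_le_log (by positivity) (hgap k)

lemma two_rpow_mul_le_succ (hα : 1 < α) (hn2 : ∀ k, 2 ≤ n k)
    (hgap : ∀ k, (n k : ℝ) ^ α ≤ n (k + 1)) (k : ℕ) :
    (2 : ℝ) ^ (α - 1) * n k ≤ n (k + 1) := by
  have h2 : (2 : ℝ) ≤ n k := by exact_mod_cast hn2 k
  calc (2 : ℝ) ^ (α - 1) * n k ≤ (n k : ℝ) ^ (α - 1) * n k := by gcongr
    _ = (n k : ℝ) ^ α := by rw [← rpow_add_one (by positivity), sub_add_cancel]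
    _ ≤ n (k + 1) := hgap k

lemma strictMono_of_rpow_le_succ (hα : 1 < α) (hn2 : ∀ k, 2 ≤ n k)
    (hgap : ∀ k, (n k : ℝ) ^ α ≤ n (k + 1)) : StrictMono n := by
  refine strictMono_nat_of_lt_succ fun k => ?_
  have hq : (1 : ℝ) < 2 ^ (α - 1) := one_lt_rpow (by norm_num) (by linarith)
  have hpos : (0 : ℝ) < n k := by have := hn2 k; positivity
  exact_mod_cast (lt_mul_of_one_lt_left hpos hq).trans_le (two_rpow_mul_le_succ hα hn2 hgap k)

lemma summable_log_mul_pow (hn : StrictMono n) {r : ℝ} (hr0 : 0 ≤ r) (hr1 : r < 1) :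
    Summable fun k => log (n k) * r ^ n k := by
  have h := (summable_pow_mul_geometric_of_norm_lt_one 1 (r := r)
    (by rwa [norm_of_nonneg hr0])).comp_injective hn.injective
  refine Summable.of_nonneg_of_le
    (fun k => mul_nonneg (log_natCast_nonneg _) (pow_nonneg hr0 _)) (fun k => ?_) h
  simp only [Function.comp_apply, pow_one]
  gcongr
  exact log_le_self (Nat.cast_nonneg _)

lemma sum_range_log_mul_one_sub_pow_le (hα : 1 < α) (hn2 : ∀ k, 2 ≤ n k)
    (hgap : ∀ k, (n k : ℝ) ^ α ≤ n (k + 1)) {t : ℝ} (ht0 : 0 < t) (ht1 : t ≤ 1) {K : ℕ}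
    (hK : ∀ k < K, t * n k ≤ 1) :
    ∑ k ∈ range K, log (n k) * (1 - t) ^ n k ≤ α / (α - 1) * log (exp 1 / t) := by
  cases K with
  | zero =>
    have : 0 < α - 1 := by linarith
    have := one_le_log_exp_one_div ht0 ht1
    simp only [range_zero, sum_empty]
    positivity
  | succ K =>
    have hnK : (0 : ℝ) < n K := by have := hn2 K; positivity
    calc ∑ k ∈ range (K + 1), log (n k) * (1 - t) ^ n k ≤ ∑ k ∈ range (K + 1), log (n k) :=
          sum_le_sum fun k _ => mul_le_of_le_one_right (log_natCast_nonneg _)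
            (pow_le_one₀ (by linarith) (by linarith))
      _ ≤ α / (α - 1) * log (n K) :=
          sum_range_succ_le_of_mul_le_succ hα (fun k => log_natCast_nonneg _)
            (mul_log_le_log_succ hn2 hgap) K
      _ ≤ α / (α - 1) * log (exp 1 / t) :=
          mul_le_mul_of_nonneg_left (log_le_log_exp_one_div ht0 hnK (hK K (by omega)))
            (div_nonneg (by linarith) (by linarith))

lemma tsum_log_mul_one_sub_pow_add_le (hα : 1 < α) (hn2 : ∀ k, 2 ≤ n k)
    (hgap : ∀ k, (n k : ℝ) ^ α ≤ n (k + 1)) {t : ℝ} (ht0 : 0 < t) (ht1 : t ≤ 1) {K : ℕ}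
    (hK : 1 ≤ t * n K) :
    ∑' j, log (n (j + K)) * (1 - t) ^ n (j + K) ≤
      2 * (1 - ((2 : ℝ) ^ (α - 1))⁻¹)⁻¹ * log (exp 1 / t) := by
  set q : ℝ := (2 : ℝ) ^ (α - 1)
  set X := log (exp 1 / t)
  have hq : 1 < q := one_lt_rpow (by norm_num) (by linarith)
  have hq0 : 0 ≤ q⁻¹ := by positivity
  have hq1 : q⁻¹ < 1 := inv_lt_one_of_one_lt₀ hq
  have hX : 1 ≤ X := one_le_log_exp_one_div ht0 ht1
  have hterm : ∀ j, log (n (j + K)) * (1 - t) ^ n (j + K) ≤ 2 * X * q⁻¹ ^ j := by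
    intro j
    have hgrowth : q ^ j ≤ t * n (j + K) := by
      have := pow_mul_le_add_of_mul_le_succ (f := fun k => (n k : ℝ)) (by positivity)
        (two_rpow_mul_le_succ hα hn2 hgap) K j
      rw [add_comm K j] at this
      nlinarith [pow_pos (by positivity : 0 < q) j]
    have hqj : 0 < q ^ j := by positivity
    calc log (n (j + K)) * (1 - t) ^ n (j + K) ≤ 2 * X / (t * n (j + K)) :=
          log_mul_one_sub_pow_le ht0 ht1 ((one_le_pow₀ hq.le).trans hgrowth)
      _ ≤ 2 * X / q ^ j := by gcongr
      _ = 2 * X * q⁻¹ ^ j := by rw [inv_pow, div_eq_mul_inv]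
  have hgeom : Summable fun j : ℕ => 2 * X * q⁻¹ ^ j :=
    (summable_geometric_of_lt_one hq0 hq1).mul_left _
  have hnonneg : ∀ j, 0 ≤ log (n (j + K)) * (1 - t) ^ n (j + K) := fun j =>
    mul_nonneg (log_natCast_nonneg _) (pow_nonneg (by linarith) _)
  calc ∑' j, log (n (j + K)) * (1 - t) ^ n (j + K) ≤ ∑' j : ℕ, 2 * X * q⁻¹ ^ j :=
        Summable.tsum_le_tsum hterm (Summable.of_nonneg_of_le hnonneg hterm hgeom) hgeom
    _ = 2 * (1 - q⁻¹)⁻¹ * X := by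
        rw [tsum_mul_left, tsum_geometric_of_lt_one hq0 hq1]; ring

lemma exists_tsum_log_mul_pow_le (hα : 1 < α) (hn2 : ∀ k, 2 ≤ n k)
    (hgap : ∀ k, (n k : ℝ) ^ α ≤ n (k + 1)) :
    ∃ C, 0 < C ∧ ∀ r, 0 ≤ r → r < 1 →
      ∑' k, log (n k) * r ^ n k ≤ C * log (exp 1 / (1 - r)) := by
  have hn : StrictMono n := strictMono_of_rpow_le_succ hα hn2 hgap
  have hq : 1 < (2 : ℝ) ^ (α - 1) := one_lt_rpow (by norm_num) (by linarith)
  have hα1 : 0 < α - 1 := by linarith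
  have hq1 : 0 < 1 - ((2 : ℝ) ^ (α - 1))⁻¹ := sub_pos.mpr (inv_lt_one_of_one_lt₀ hq)
  refine ⟨α / (α - 1) + 2 * (1 - ((2 : ℝ) ^ (α - 1))⁻¹)⁻¹, by positivity, fun r hr0 hr1 => ?_⟩
  obtain ⟨t, rfl⟩ : ∃ t, r = 1 - t := ⟨1 - r, by ring⟩
  have ht0 : 0 < t := by linarith
  have ht1 : t ≤ 1 := by linarith
  have hex : ∃ k, 1 < t * n k := by
    obtain ⟨k, hk⟩ := exists_nat_gt (1 / t)
    refine ⟨k, (div_lt_iff₀' ht0).mp (hk.trans_le ?_)⟩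
    exact_mod_cast hn.id_le k
  rw [sub_sub_cancel, ← (summable_log_mul_pow hn hr0 hr1).sum_add_tsum_nat_add (Nat.find hex),
    add_mul]
  gcongr
  · exact sum_range_log_mul_one_sub_pow_le hα hn2 hgap ht0 ht1
      fun k hk => not_lt.mp (Nat.find_min hex hk)
  · exact tsum_log_mul_one_sub_pow_add_le hα hn2 hgap ht0 ht1 (Nat.find_spec hex).le

end Lacunary

section Coefficients

variable {a : ℕ → ℂ} {n : ℕ → ℕ}

lemma differentiableOn_tsum_mul_pow
    (h : ∀ r : ℝ, 0 ≤ r → r < 1 → Summable fun k => ‖a k‖ * r ^ n k) :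
    DifferentiableOn ℂ (fun z => ∑' k, a k * z ^ n k) (ball 0 1) := by
  intro z hz
  obtain ⟨r, hzr, hr1⟩ := exists_between (mem_ball_zero_iff.mp hz)
  have hdiff : DifferentiableOn ℂ (fun w => ∑' k, a k * w ^ n k) (ball 0 r) :=
    Complex.differentiableOn_tsum_of_summable_norm (h r ((norm_nonneg z).trans hzr.le) hr1)
      (fun k => ((differentiable_pow (n k)).const_mul (a k)).differentiableOn) isOpen_ball
      fun k w hw => by
        rw [norm_mul, norm_pow]
        gcongr
        exact (mem_ball_zero_iff.mp hw).le
  exact (hdiff.differentiableAt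
    (isOpen_ball.mem_nhds (mem_ball_zero_iff.mpr hzr))).differentiableWithinAt

lemma eventually_norm_le_mul_log (hn2 : ∀ k, 2 ≤ n k)
    (hcoeff : Tendsto (fun k => ‖a k‖ / log (n k)) atTop (nhds 0)) {ε : ℝ} (hε : 0 < ε) :
    ∀ᶠ k in atTop, ‖a k‖ ≤ ε * log (n k) := by
  filter_upwards [hcoeff.eventually_lt_const hε] with k hk
  have hlog : 0 < log (n k) := log_pos (by exact_mod_cast (hn2 k).trans_lt' one_lt_two)
  exact ((div_lt_iff₀ hlog).mp hk).le

lemma summable_norm_mul_pow (hn2 : ∀ k, 2 ≤ n k) (hn : StrictMono n)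
    (hcoeff : Tendsto (fun k => ‖a k‖ / log (n k)) atTop (nhds 0)) {r : ℝ} (hr0 : 0 ≤ r)
    (hr1 : r < 1) : Summable fun k => ‖a k‖ * r ^ n k := by
  refine (summable_log_mul_pow hn hr0 hr1).of_norm_bounded_eventually ?_
  rw [Nat.cofinite_eq_atTop]
  filter_upwards [eventually_norm_le_mul_log hn2 hcoeff one_pos] with k hk
  rw [norm_of_nonneg (by positivity)]
  gcongr
  linarith

lemma exists_tsum_norm_mul_pow_le {α : ℝ} (hα : 1 < α) (hn2 : ∀ k, 2 ≤ n k)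
    (hgap : ∀ k, (n k : ℝ) ^ α ≤ n (k + 1))
    (hcoeff : Tendsto (fun k => ‖a k‖ / log (n k)) atTop (nhds 0)) {ε : ℝ} (hε : 0 < ε) :
    ∃ A, ∀ r, 0 ≤ r → r < 1 →
      ∑' k, ‖a k‖ * r ^ n k ≤ A + ε * log (exp 1 / (1 - r)) := by
  obtain ⟨C, hC, hlog⟩ := exists_tsum_log_mul_pow_le hα hn2 hgap
  have hn : StrictMono n := strictMono_of_rpow_le_succ hα hn2 hgap
  obtain ⟨K, hK⟩ := eventually_atTop.mp (eventually_norm_le_mul_log hn2 hcoeff (div_pos hε hC))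
  refine ⟨∑ k ∈ range K, ‖a k‖, fun r hr0 hr1 => ?_⟩
  have hL := summable_log_mul_pow hn hr0 hr1
  have hLnonneg : ∀ k, 0 ≤ log (n k) * r ^ n k := fun k =>
    mul_nonneg (log_natCast_nonneg _) (pow_nonneg hr0 _)
  have hhead : ∑ k ∈ range K, ‖a k‖ * r ^ n k ≤ ∑ k ∈ range K, ‖a k‖ :=
    sum_le_sum fun k _ => mul_le_of_le_one_right (norm_nonneg _) (pow_le_one₀ hr0 hr1.le)
  have htail : ∑' j, ‖a (j + K)‖ * r ^ n (j + K) ≤ ε / C * ∑' k, log (n k) * r ^ n k :=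
    calc ∑' j, ‖a (j + K)‖ * r ^ n (j + K)
        ≤ ∑' j, ε / C * (log (n (j + K)) * r ^ n (j + K)) := by
          refine Summable.tsum_le_tsum (fun j => ?_)
            ((summable_nat_add_iff K).mpr (summable_norm_mul_pow hn2 hn hcoeff hr0 hr1))
            (((summable_nat_add_iff K).mpr hL).mul_left _)
          rw [← mul_assoc]
          exact mul_le_mul_of_nonneg_right (hK _ (Nat.le_add_left K j)) (pow_nonneg hr0 _)
      _ = ε / C * ∑' j, log (n (j + K)) * r ^ n (j + K) := tsum_mul_left
      _ ≤ ε / C * ∑' k, log (n k) * r ^ n k :=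
          mul_le_mul_of_nonneg_left (tsum_comp_le_tsum_of_inj hL hLnonneg (add_left_injective K))
            (by positivity)
  rw [← (summable_norm_mul_pow hn2 hn hcoeff hr0 hr1).sum_add_tsum_nat_add K]
  calc _ ≤ ∑ k ∈ range K, ‖a k‖ + ε / C * (C * log (exp 1 / (1 - r))) := by
        gcongr
        exact htail.trans (mul_le_mul_of_nonneg_left (hlog r hr0 hr1) (by positivity))
    _ = ∑ k ∈ range K, ‖a k‖ + ε * log (exp 1 / (1 - r)) := by field_simp

end Coefficients

theorem X0_of_coeff_limit_general (a : ℕ → ℂ) (n : ℕ → ℕ) (α β : ℝ)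
    (hα : 1 < α) (hn2 : ∀ k, 2 ≤ n k)
    (hgap : ∀ k, ((n k : ℝ)) ^ α ≤ (n (k + 1) : ℝ) ∧ (n (k + 1) : ℝ) ≤ ((n k : ℝ)) ^ (α * β))
    (hcoeff : Tendsto (fun k => ‖a k‖ / Real.log (n k)) atTop (nhds 0)) :
    DifferentiableOn ℂ (fun z => ∑' k : ℕ, a k * z ^ n k) (ball (0 : ℂ) 1) ∧
      ∀ ε : ℝ, 0 < ε → ∃ δ : ℝ, δ < 1 ∧ ∀ z ∈ ball (0 : ℂ) 1, δ < ‖z‖ →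
        ‖∑' k : ℕ, a k * z ^ n k‖ / Real.log (Real.exp 1 / (1 - ‖z‖)) < ε := by
  have hgap₁ : ∀ k, (n k : ℝ) ^ α ≤ n (k + 1) := fun k => (hgap k).1
  have hn : StrictMono n := strictMono_of_rpow_le_succ hα hn2 hgap₁
  have hsum : ∀ r : ℝ, 0 ≤ r → r < 1 → Summable fun k => ‖a k‖ * r ^ n k := fun r =>
    summable_norm_mul_pow hn2 hn hcoeff
  refine ⟨differentiableOn_tsum_mul_pow hsum, fun ε hε => ?_⟩
  obtain ⟨A, hA⟩ := exists_tsum_norm_mul_pow_le hα hn2 hgap₁ hcoeff (half_pos hε)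
  refine ⟨1 - exp (1 - 2 * A / ε), by linarith [exp_pos (1 - 2 * A / ε)], fun z hz hδz => ?_⟩
  have hz1 : ‖z‖ < 1 := mem_ball_zero_iff.mp hz
  have hX : 2 * A / ε < log (exp 1 / (1 - ‖z‖)) := lt_log_exp_one_div_one_sub hδz hz1
  have hX1 : 1 ≤ log (exp 1 / (1 - ‖z‖)) :=
    one_le_log_exp_one_div (sub_pos.mpr hz1) (by linarith [norm_nonneg z])
  rw [div_lt_iff₀ hε] at hX
  rw [div_lt_iff₀ (by linarith)]
  calc ‖∑' k, a k * z ^ n k‖ ≤ ∑' k, ‖a k‖ * ‖z‖ ^ n k :=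
        tsum_of_norm_bounded (hsum _ (norm_nonneg z) hz1).hasSum fun k => by
          rw [norm_mul, norm_pow]
    _ ≤ A + ε / 2 * log (exp 1 / (1 - ‖z‖)) := hA _ (norm_nonneg z) hz1
    _ < ε * log (exp 1 / (1 - ‖z‖)) := by linarith

/-- If the exponents satisfy `n_k^α ≤ n_{k+1} ≤ n_k^{αβ}` with `α, β > 1` and
`|a_k|/log n_k → 0`, then `f(z) = Σ a_k z^{n_k}` is analytic on the unit disk and
`|f(z)|/log(e/(1-|z|)) → 0` as `|z| → 1⁻`. -/
theorem X0_of_coeff_limit (a : ℕ → ℂ) (n : ℕ → ℕ) (α β : ℝ)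
    (hα : 1 < α) (hβ : 1 < β) (hn2 : ∀ k, 2 ≤ n k)
    (hgap : ∀ k, ((n k : ℝ)) ^ α ≤ (n (k + 1) : ℝ) ∧ (n (k + 1) : ℝ) ≤ ((n k : ℝ)) ^ (α * β))
    (hcoeff : Tendsto (fun k => ‖a k‖ / Real.log (n k)) atTop (nhds 0)) :
    DifferentiableOn ℂ (fun z => ∑' k : ℕ, a k * z ^ n k) (ball (0 : ℂ) 1) ∧
      ∀ ε : ℝ, 0 < ε → ∃ δ : ℝ, δ < 1 ∧ ∀ z ∈ ball (0 : ℂ) 1, δ < ‖z‖ →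
        ‖∑' k : ℕ, a k * z ^ n k‖ / Real.log (Real.exp 1 / (1 - ‖z‖)) < ε :=
  X0_of_coeff_limit_general a n α β hα hn2 hgap hcoeff
end

section
/- The function h(z) = Σ_{k=1}^∞ k z^{2^{2^k}} is analytic on the unit disk and satisfies lim_{|z|→1^-} |h(z)|/log(e/(1-|z|)) = 0. -/
open Metric Filter Topology

/-! Write `N k = 2 ^ 2 ^ k` and `t = 1 - ‖z‖`, and pick `n` with `t * N n < 1 ≤ t * N (n + 1)`.
The terms with `k ≤ n` contribute at most `(n + 1) ^ 2`. From `k = n + 1` on,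
`‖z‖ ^ N k ≤ 2 ^ (-(k - n))` because `N (j + m) ≥ (j + 1) * N m` and `‖z‖ ^ N (n + 1) ≤ e ^ (-1)`;
so these terms add up to `O(n)`. On the other hand `t * N n < 1` gives
`log (e / t) > 2 ^ n * log 2`, and `n ^ 2 / 2 ^ n → 0`. -/

lemma le_two_pow_two_pow (k : ℕ) : k ≤ 2 ^ 2 ^ k :=
  (Nat.lt_two_pow_self.trans (Nat.pow_lt_pow_right one_lt_two Nat.lt_two_pow_self)).le

lemma succ_mul_two_pow_two_pow_le (j m : ℕ) : (j + 1) * 2 ^ 2 ^ m ≤ 2 ^ 2 ^ (j + m) := by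
  have hj : j + 1 ≤ 2 ^ j := Nat.lt_two_pow_self
  have hexp : j + 2 ^ m ≤ 2 ^ (j + m) := by
    rw [pow_add]
    nlinarith [Nat.one_le_two_pow (n := m)]
  calc (j + 1) * 2 ^ 2 ^ m ≤ 2 ^ j * 2 ^ 2 ^ m := Nat.mul_le_mul_right _ hj
    _ = 2 ^ (j + 2 ^ m) := (pow_add _ _ _).symm
    _ ≤ 2 ^ 2 ^ (j + m) := Nat.pow_le_pow_right two_pos hexp

lemma summable_mul_pow_two_pow_two_pow {r : ℝ} (h0 : 0 ≤ r) (h1 : r < 1) :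
    Summable fun k : ℕ => (k : ℝ) * r ^ 2 ^ 2 ^ k := by
  refine (summable_pow_mul_geometric_of_norm_lt_one 1
    (by rwa [Real.norm_of_nonneg h0])).of_nonneg_of_le (fun k => by positivity) fun k => ?_
  simpa using mul_le_mul_of_nonneg_left
    (pow_le_pow_of_le_one h0 h1.le (le_two_pow_two_pow k)) k.cast_nonneg

lemma norm_natCast_mul_pow (k n : ℕ) (z : ℂ) : ‖(k : ℂ) * z ^ n‖ = k * ‖z‖ ^ n := by
  rw [norm_mul, norm_pow, Complex.norm_natCast]

lemma norm_tsum_mul_pow_two_pow_two_pow_le {z : ℂ} (hz : ‖z‖ < 1) :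
    ‖∑' k : ℕ, (k : ℂ) * z ^ 2 ^ 2 ^ k‖ ≤ ∑' k : ℕ, (k : ℝ) * ‖z‖ ^ 2 ^ 2 ^ k := by
  have hsum : Summable fun k : ℕ => ‖(k : ℂ) * z ^ 2 ^ 2 ^ k‖ := by
    simpa only [norm_natCast_mul_pow] using
      summable_mul_pow_two_pow_two_pow (norm_nonneg z) hz
  simpa only [norm_natCast_mul_pow] using norm_tsum_le_tsum_norm hsum

lemma differentiableOn_tsum_mul_pow_two_pow_two_pow :
    DifferentiableOn ℂ (fun z => ∑' k : ℕ, (k : ℂ) * z ^ 2 ^ 2 ^ k) (ball (0 : ℂ) 1) := by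
  intro z hz
  obtain ⟨ρ, hzρ, hρ1⟩ := exists_between (mem_ball_zero_iff.mp hz)
  have hρ : DifferentiableOn ℂ (fun z => ∑' k : ℕ, (k : ℂ) * z ^ 2 ^ 2 ^ k) (ball 0 ρ) :=
    Complex.differentiableOn_tsum_of_summable_norm
      (summable_mul_pow_two_pow_two_pow ((norm_nonneg z).trans hzρ.le) hρ1)
      (fun k => ((differentiable_const _).mul (differentiable_pow _)).differentiableOn)
      isOpen_ball fun k w hw => by
        rw [norm_natCast_mul_pow]
        exact mul_le_mul_of_nonneg_left
          (pow_le_pow_left₀ (norm_nonneg w) (mem_ball_zero_iff.mp hw).le _) k.cast_nonneg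
  exact (hρ.differentiableAt
    (isOpen_ball.mem_nhds (mem_ball_zero_iff.mpr hzρ))).differentiableWithinAt

lemma sum_range_natCast_mul_pow_le {r : ℝ} (h0 : 0 ≤ r) (h1 : r ≤ 1) (N : ℕ → ℕ) (m : ℕ) :
    ∑ k ∈ Finset.range m, (k : ℝ) * r ^ N k ≤ m ^ 2 :=
  calc ∑ k ∈ Finset.range m, (k : ℝ) * r ^ N k ≤ ∑ _k ∈ Finset.range m, (m : ℝ) :=
        Finset.sum_le_sum fun k hk =>
          (mul_le_of_le_one_right k.cast_nonneg (pow_le_one₀ h0 h1)).trans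
            (by exact_mod_cast (Finset.mem_range.mp hk).le)
    _ = m ^ 2 := by simp [sq]

lemma pow_le_half_of_one_le_mul {r : ℝ} (h0 : 0 ≤ r) {N : ℕ} (h : 1 ≤ (1 - r) * N) :
    r ^ N ≤ 1 / 2 :=
  calc r ^ N ≤ Real.exp (-(1 - r)) ^ N :=
        pow_le_pow_left₀ h0 (by linarith [Real.add_one_le_exp (-(1 - r))]) N
    _ = Real.exp (-((1 - r) * N)) := by rw [← Real.exp_nat_mul]; ring_nf
    _ ≤ Real.exp (-1) := Real.exp_le_exp.mpr (by linarith)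
    _ ≤ 1 / 2 := by
        rw [Real.exp_neg, inv_eq_one_div]
        exact one_div_le_one_div_of_le two_pos (by linarith [Real.add_one_le_exp 1])

lemma tsum_mul_pow_two_pow_two_pow_add_le {r : ℝ} (h0 : 0 ≤ r) (h1 : r < 1) {m : ℕ}
    (hm1 : 1 ≤ m) (hm : r ^ 2 ^ 2 ^ m ≤ 1 / 2) :
    ∑' j : ℕ, ((j + m : ℕ) : ℝ) * r ^ 2 ^ 2 ^ (j + m) ≤ m * 2 := by
  have hgeom :
      HasSum (fun j : ℕ => (m : ℝ) * (((j : ℝ) + 1) * (1 / 2 : ℝ) ^ (j + 1))) (m * 2) := by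
    have h := (hasSum_nat_add_iff' 1).mpr
      (hasSum_coe_mul_geometric_of_norm_lt_one (r := (1 / 2 : ℝ)) (by norm_num))
    norm_num at h
    exact h.mul_left (m : ℝ)
  refine (Summable.tsum_le_tsum (fun j => ?_) ((summable_nat_add_iff m).mpr
    (summable_mul_pow_two_pow_two_pow h0 h1)) hgeom.summable).trans_eq hgeom.tsum_eq
  have hcoef : ((j + m : ℕ) : ℝ) ≤ m * ((j : ℝ) + 1) := by
    push_cast
    nlinarith [(by exact_mod_cast hm1 : (1 : ℝ) ≤ m)]
  have hpow : r ^ 2 ^ 2 ^ (j + m) ≤ (1 / 2) ^ (j + 1) :=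
    calc r ^ 2 ^ 2 ^ (j + m) ≤ r ^ ((j + 1) * 2 ^ 2 ^ m) :=
          pow_le_pow_of_le_one h0 h1.le (succ_mul_two_pow_two_pow_le j m)
      _ = (r ^ 2 ^ 2 ^ m) ^ (j + 1) := pow_mul' _ _ _
      _ ≤ (1 / 2) ^ (j + 1) := pow_le_pow_left₀ (by positivity) hm _
  rw [← mul_assoc]
  exact mul_le_mul hcoef hpow (by positivity) (by positivity)

lemma tsum_mul_pow_two_pow_two_pow_le {r : ℝ} (h0 : 0 ≤ r) (h1 : r < 1) {m : ℕ}
    (hm1 : 1 ≤ m) (hm : r ^ 2 ^ 2 ^ m ≤ 1 / 2) :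
    ∑' k : ℕ, (k : ℝ) * r ^ 2 ^ 2 ^ k ≤ 3 * m ^ 2 := by
  rw [← (summable_mul_pow_two_pow_two_pow h0 h1).sum_add_tsum_nat_add m]
  have hhead := sum_range_natCast_mul_pow_le h0 h1.le (fun k => 2 ^ 2 ^ k) m
  have htail := tsum_mul_pow_two_pow_two_pow_add_le h0 h1 hm1 hm
  nlinarith [(by exact_mod_cast hm1 : (1 : ℝ) ≤ m)]

lemma two_pow_mul_log_two_lt_log_exp_one_div {t : ℝ} (ht : 0 < t) {n : ℕ}
    (h : t * 2 ^ 2 ^ n < 1) : 2 ^ n * Real.log 2 < Real.log (Real.exp 1 / t) := by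
  have hlog : Real.log (t * 2 ^ 2 ^ n) < 0 := Real.log_neg (by positivity) h
  rw [Real.log_mul ht.ne' (by positivity), Real.log_pow] at hlog
  rw [Real.log_div (Real.exp_ne_zero 1) ht.ne', Real.log_exp]
  push_cast at hlog
  linarith

lemma exists_mul_two_pow_two_pow_lt_one_le {t : ℝ} (ht : 0 < t) {M : ℕ}
    (hM : t * 2 ^ 2 ^ M < 1) :
    ∃ n, M ≤ n ∧ t * 2 ^ 2 ^ n < 1 ∧ 1 ≤ t * 2 ^ 2 ^ (n + 1) := by
  have hlarge : ∃ k, 1 ≤ t * 2 ^ 2 ^ (M + k) := by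
    obtain ⟨k, hk⟩ := exists_nat_ge t⁻¹
    refine ⟨k, (inv_le_iff_one_le_mul₀' ht).mp ?_⟩
    calc t⁻¹ ≤ k := hk
      _ ≤ (2 ^ 2 ^ (M + k) : ℕ) := by exact_mod_cast (le_two_pow_two_pow _).trans' (by omega)
      _ = (2 : ℝ) ^ 2 ^ (M + k) := by push_cast; rfl
  obtain ⟨k, hk, hk1⟩ :=
    Nat.exists_not_and_succ_of_not_zero_of_exists (by simpa using hM) hlarge
  exact ⟨M + k, by omega, not_le.mp hk, hk1⟩

lemma norm_tsum_div_log_lt {z : ℂ} (hz : ‖z‖ < 1) {n : ℕ}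
    (hn : (1 - ‖z‖) * 2 ^ 2 ^ n < 1) (hn1 : 1 ≤ (1 - ‖z‖) * 2 ^ 2 ^ (n + 1)) :
    ‖∑' k : ℕ, (k : ℂ) * z ^ 2 ^ 2 ^ k‖ / Real.log (Real.exp 1 / (1 - ‖z‖)) <
      12 * ((n + 1 : ℕ) ^ 2 * (1 / 2 : ℝ) ^ (n + 1)) := by
  have ht : 0 < 1 - ‖z‖ := by linarith
  have hS : ‖∑' k : ℕ, (k : ℂ) * z ^ 2 ^ 2 ^ k‖ ≤ 3 * (n + 1 : ℕ) ^ 2 :=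
    (norm_tsum_mul_pow_two_pow_two_pow_le hz).trans <|
      tsum_mul_pow_two_pow_two_pow_le (norm_nonneg z) hz n.succ_pos <|
        pow_le_half_of_one_le_mul (norm_nonneg z) (by exact_mod_cast hn1)
  have hL := two_pow_mul_log_two_lt_log_exp_one_div ht hn
  have hlog2 := Real.log_two_gt_d9
  rw [div_lt_iff₀ (by linarith [(by positivity : (0 : ℝ) < 2 ^ n * Real.log 2)])]
  calc ‖∑' k : ℕ, (k : ℂ) * z ^ 2 ^ 2 ^ k‖ ≤ 3 * (n + 1 : ℕ) ^ 2 := hS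
    _ < 12 * ((n + 1 : ℕ) ^ 2 * (1 / 2 : ℝ) ^ (n + 1)) * (2 ^ n * Real.log 2) := by
        rw [pow_succ, one_div_pow]
        field_simp
        rw [pow_succ]
        nlinarith [mul_lt_mul_of_pos_left hlog2 (pow_pos two_pos n : (0 : ℝ) < 2 ^ n)]
    _ ≤ 12 * ((n + 1 : ℕ) ^ 2 * (1 / 2 : ℝ) ^ (n + 1)) *
          Real.log (Real.exp 1 / (1 - ‖z‖)) :=
        mul_le_mul_of_nonneg_left hL.le (by positivity)

/-- The function `h(z) = Σ_{k≥1} k z^{2^{2^k}}` is analytic on the unit disk and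
`|h(z)|/log(e/(1-|z|)) → 0` as `|z| → 1⁻`. -/
theorem counterexample_in_X0 :
    DifferentiableOn ℂ (fun z => ∑' k : ℕ, (k : ℂ) * z ^ (2 ^ 2 ^ k)) (ball (0 : ℂ) 1) ∧
      ∀ ε : ℝ, 0 < ε → ∃ δ : ℝ, δ < 1 ∧ ∀ z ∈ ball (0 : ℂ) 1, δ < ‖z‖ →
        ‖∑' k : ℕ, (k : ℂ) * z ^ (2 ^ 2 ^ k)‖ / Real.log (Real.exp 1 / (1 - ‖z‖)) < ε := by
  refine ⟨differentiableOn_tsum_mul_pow_two_pow_two_pow, fun ε hε => ?_⟩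
  have hlim :
      Tendsto (fun n : ℕ => 12 * ((n + 1 : ℕ) ^ 2 * (1 / 2 : ℝ) ^ (n + 1))) atTop (𝓝 0) := by
    simpa using ((tendsto_add_atTop_iff_nat 1).mpr (tendsto_pow_const_mul_const_pow_of_abs_lt_one
      2 (by norm_num : |(1 / 2 : ℝ)| < 1))).const_mul 12
  obtain ⟨M, hM⟩ := eventually_atTop.mp (hlim.eventually_lt_const hε)
  refine ⟨1 - 1 / 2 ^ 2 ^ M, by simp, fun z hz hδ => ?_⟩
  have hz1 := mem_ball_zero_iff.mp hz
  obtain ⟨n, hMn, hn, hn1⟩ := exists_mul_two_pow_two_pow_lt_one_le (sub_pos.mpr hz1) (M := M)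
    ((lt_div_iff₀ (by positivity)).mp (by linarith))
  exact (norm_tsum_div_log_lt hz1 hn hn1).trans (hM n hMn)
end

section
/- There exists an analytic function h on the unit disk such that lim_{|z|→1^-} |h(z)|/log(e/(1-|z|)) = 0 but sup_{z∈D}(1-|z|^2)|h'(z)| = ∞; i.e., the little space X_0 is not contained in the Bloch space. -/
open Metric

/-!
The function `w(z) = 1 - log (1 - z)` is a holomorphic companion of the weight
`log (e / (1 - |z|))`: on the disk, `0 < Re w ≤ log (e / (1 - |z|))` and `|Im w| ≤ π`.
Take `h = √w · sin w`. As `sin` is bounded on horizontal strips,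
`|h(z)| ≲ √(log (e / (1 - |z|)))`, which is `o(log (e / (1 - |z|)))`. At the real points
`z = 1 - e^(1 - v)` with `v ∈ 2πℕ` we have `w = v`, so `sin w = 0`, `cos w = 1`,
`h'(z) = √v / (1 - z)`, and `(1 - |z|²) |h'(z)| = (1 + |z|) √v ≥ √v` is unbounded.
-/

open Real

lemma Complex.norm_sin_le_exp_abs_im (w : ℂ) : ‖Complex.sin w‖ ≤ Real.exp |w.im| := by
  have h₁ : ‖Complex.exp (-w * Complex.I)‖ ≤ Real.exp |w.im| := by
    rw [Complex.norm_exp]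
    exact Real.exp_le_exp.2 (by simpa using le_abs_self w.im)
  have h₂ : ‖Complex.exp (w * Complex.I)‖ ≤ Real.exp |w.im| := by
    rw [Complex.norm_exp]
    exact Real.exp_le_exp.2 (by simpa using neg_le_abs w.im)
  calc ‖Complex.sin w‖
      = ‖Complex.exp (-w * Complex.I) - Complex.exp (w * Complex.I)‖ / 2 := by
        simp [Complex.sin]
    _ ≤ (‖Complex.exp (-w * Complex.I)‖ + ‖Complex.exp (w * Complex.I)‖) / 2 := by
        gcongr; exact norm_sub_le _ _
    _ ≤ Real.exp |w.im| := by linarith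

lemma log_exp_one_div_one_sub {r : ℝ} (hr : r < 1) :
    Real.log (Real.exp 1 / (1 - r)) = 1 - Real.log (1 - r) := by
  rw [Real.log_div (Real.exp_ne_zero 1) (by linarith), Real.log_exp]

lemma one_le_log_exp_one_div_one_sub {r : ℝ} (hr₀ : 0 ≤ r) (hr : r < 1) :
    1 ≤ Real.log (Real.exp 1 / (1 - r)) := by
  rw [log_exp_one_div_one_sub hr]
  linarith [Real.log_nonpos (by linarith : 0 ≤ 1 - r) (by linarith)]

lemma lt_log_exp_one_div_one_sub_s15 {A r : ℝ} (hA : 1 - Real.exp (-A) < r) (hr : r < 1) :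
    A < Real.log (Real.exp 1 / (1 - r)) := by
  rw [log_exp_one_div_one_sub hr]
  have : Real.log (1 - r) < -A := (Real.log_lt_iff_lt_exp (by linarith)).2 (by linarith)
  linarith

lemma div_lt_of_sq_le_mul {a C L ε : ℝ} (hε : 0 < ε) (hC : 0 ≤ C) (hL : C / ε ^ 2 < L)
    (haL : a ^ 2 ≤ C * L) : a / L < ε := by
  have hL₀ : 0 < L := (by positivity : 0 ≤ C / ε ^ 2).trans_lt hL
  have : a ^ 2 < (ε * L) ^ 2 :=
    calc a ^ 2 ≤ C * L := haL
      _ < ε ^ 2 * L * L := by gcongr; exact (div_lt_iff₀' (by positivity)).1 hL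
      _ = (ε * L) ^ 2 := by ring
  rw [div_lt_iff₀ hL₀]
  exact lt_of_pow_lt_pow_left₀ 2 (by positivity) this

lemma Complex.one_sub_mem_slitPlane_of_norm_lt_one {z : ℂ} (hz : ‖z‖ < 1) :
    1 - z ∈ Complex.slitPlane := by
  simpa [sub_eq_add_neg] using Complex.mem_slitPlane_of_norm_lt_one (z := -z) (by simpa)

lemma Complex.norm_cpow_inv_two (w : ℂ) : ‖w ^ (2⁻¹ : ℂ)‖ = √‖w‖ := by
  simpa [Real.sqrt_eq_rpow] using Complex.norm_cpow_real w 2⁻¹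

noncomputable def logWeight (z : ℂ) : ℂ := 1 - Complex.log (1 - z)

section logWeight

variable {z : ℂ}

lemma logWeight_re (z : ℂ) : (logWeight z).re = 1 - Real.log ‖1 - z‖ := by
  simp [logWeight, Complex.log_re]

lemma abs_logWeight_im_le (z : ℂ) : |(logWeight z).im| ≤ π := by
  simpa [logWeight, Complex.log_im] using Complex.abs_arg_le_pi (1 - z)

lemma logWeight_re_pos (hz : ‖z‖ < 1) : 0 < (logWeight z).re := by
  have hlt : ‖1 - z‖ < 2 := (norm_sub_le 1 z).trans_lt (by simp; linarith)
  have hpos : 0 < ‖1 - z‖ :=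
    norm_pos_iff.2 (Complex.slitPlane_ne_zero (Complex.one_sub_mem_slitPlane_of_norm_lt_one hz))
  rw [logWeight_re]
  linarith [Real.log_le_sub_one_of_pos hpos]

lemma logWeight_re_le (hz : ‖z‖ < 1) :
    (logWeight z).re ≤ Real.log (Real.exp 1 / (1 - ‖z‖)) := by
  rw [logWeight_re, log_exp_one_div_one_sub hz]
  have : 1 - ‖z‖ ≤ ‖1 - z‖ := by simpa using norm_sub_norm_le (1 : ℂ) z
  linarith [Real.log_le_log (by linarith) this]

lemma norm_logWeight_le (hz : ‖z‖ < 1) :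
    ‖logWeight z‖ ≤ (1 + π) * Real.log (Real.exp 1 / (1 - ‖z‖)) := by
  have hL := one_le_log_exp_one_div_one_sub (norm_nonneg z) hz
  calc ‖logWeight z‖ ≤ |(logWeight z).re| + |(logWeight z).im| :=
        Complex.norm_le_abs_re_add_abs_im _
    _ ≤ Real.log (Real.exp 1 / (1 - ‖z‖)) + π := by
        rw [abs_of_pos (logWeight_re_pos hz)]
        exact add_le_add (logWeight_re_le hz) (abs_logWeight_im_le z)
    _ ≤ (1 + π) * Real.log (Real.exp 1 / (1 - ‖z‖)) := by
        nlinarith [Real.pi_pos]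

lemma logWeight_mem_slitPlane (hz : ‖z‖ < 1) : logWeight z ∈ Complex.slitPlane :=
  Complex.mem_slitPlane_iff.2 (Or.inl (logWeight_re_pos hz))

lemma hasDerivAt_logWeight (hz : ‖z‖ < 1) : HasDerivAt logWeight (1 - z)⁻¹ z := by
  have : HasDerivAt logWeight _ z :=
    (((hasDerivAt_id z).const_sub 1).clog
      (Complex.one_sub_mem_slitPlane_of_norm_lt_one hz)).const_sub 1
  simpa [div_eq_mul_inv] using this

lemma logWeight_one_sub_ofReal {t : ℝ} (ht : 0 < t) :
    logWeight (1 - t) = ((1 - Real.log t : ℝ) : ℂ) := by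
  simp [logWeight, ← Complex.ofReal_log ht.le]

end logWeight

noncomputable def blochCounterexample (z : ℂ) : ℂ :=
  logWeight z ^ (2⁻¹ : ℂ) * Complex.sin (logWeight z)

section blochCounterexample

variable {z : ℂ}

lemma sq_norm_blochCounterexample_le (hz : ‖z‖ < 1) :
    ‖blochCounterexample z‖ ^ 2 ≤
      (1 + π) * Real.exp π ^ 2 * Real.log (Real.exp 1 / (1 - ‖z‖)) := by
  have hsin : ‖Complex.sin (logWeight z)‖ ≤ Real.exp π :=
    (Complex.norm_sin_le_exp_abs_im _).trans (Real.exp_le_exp.2 (abs_logWeight_im_le z))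
  rw [blochCounterexample, norm_mul, Complex.norm_cpow_inv_two, mul_pow,
    Real.sq_sqrt (norm_nonneg _)]
  calc ‖logWeight z‖ * ‖Complex.sin (logWeight z)‖ ^ 2
      ≤ ‖logWeight z‖ * Real.exp π ^ 2 := by gcongr
    _ ≤ (1 + π) * Real.log (Real.exp 1 / (1 - ‖z‖)) * Real.exp π ^ 2 := by
        gcongr
        exact norm_logWeight_le hz
    _ = _ := by ring

lemma differentiableAt_blochCounterexample (hz : ‖z‖ < 1) :
    DifferentiableAt ℂ blochCounterexample z :=
  (((hasDerivAt_logWeight hz).cpow_const (logWeight_mem_slitPlane hz)).mul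
    (hasDerivAt_logWeight hz).csin).differentiableAt

lemma deriv_blochCounterexample_of_sin_eq_zero (hz : ‖z‖ < 1)
    (hsin : Complex.sin (logWeight z) = 0) (hcos : Complex.cos (logWeight z) = 1) :
    deriv blochCounterexample z = logWeight z ^ (2⁻¹ : ℂ) / (1 - z) := by
  have : HasDerivAt blochCounterexample _ z :=
    ((hasDerivAt_logWeight hz).cpow_const (c := 2⁻¹) (logWeight_mem_slitPlane hz)).mul
      (hasDerivAt_logWeight hz).csin
  rw [this.deriv]
  simp [hsin, hcos, div_eq_mul_inv]

lemma exists_sqrt_le_mul_norm_deriv_blochCounterexample {v : ℝ} (hv : 1 < v)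
    (hsin : Real.sin v = 0) (hcos : Real.cos v = 1) :
    ∃ z ∈ ball (0 : ℂ) 1,
      √v ≤ (1 - ‖z‖ ^ 2) * ‖deriv blochCounterexample z‖ := by
  set t := Real.exp (1 - v)
  have ht₀ : 0 < t := Real.exp_pos _
  have ht₁ : t < 1 := Real.exp_lt_one_iff.2 (by linarith)
  have hnorm : ‖(1 : ℂ) - t‖ = 1 - t := by
    rw [← Complex.ofReal_one, ← Complex.ofReal_sub, Complex.norm_of_nonneg (by linarith)]
  have hz : ‖(1 : ℂ) - t‖ < 1 := by linarith
  have hw : logWeight (1 - t) = v := by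
    rw [logWeight_one_sub_ofReal ht₀, Real.log_exp, sub_sub_cancel]
  have hderiv : ‖deriv blochCounterexample (1 - t)‖ = √v / t := by
    rw [deriv_blochCounterexample_of_sin_eq_zero hz (by simp [hw, ← Complex.ofReal_sin, hsin])
      (by simp [hw, ← Complex.ofReal_cos, hcos]), hw, sub_sub_cancel, norm_div,
      Complex.norm_cpow_inv_two, Complex.norm_of_nonneg (by linarith),
      Complex.norm_of_nonneg ht₀.le]
  refine ⟨_, mem_ball_zero_iff.2 hz, ?_⟩
  rw [hnorm, hderiv]
  have : (1 - (1 - t) ^ 2) * (√v / t) = (2 - t) * √v := by field_simp; ring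
  rw [this]
  exact le_mul_of_one_le_left (Real.sqrt_nonneg v) (by linarith)

end blochCounterexample

/-- `X₀` is not contained in the Bloch space: there is an analytic `h` on the disk
with `|h(z)|/log(e/(1-|z|)) → 0` as `|z| → 1⁻` that is not a Bloch function. -/
theorem X0_not_subset_bloch :
    ∃ h : ℂ → ℂ, DifferentiableOn ℂ h (ball (0 : ℂ) 1) ∧
      (∀ ε : ℝ, 0 < ε → ∃ δ : ℝ, δ < 1 ∧ ∀ z ∈ ball (0 : ℂ) 1, δ < ‖z‖ →
        ‖h z‖ / Real.log (Real.exp 1 / (1 - ‖z‖)) < ε) ∧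
      ¬ ∃ M : ℝ, ∀ z ∈ ball (0 : ℂ) 1, (1 - ‖z‖ ^ 2) * ‖deriv h z‖ ≤ M := by
  refine ⟨blochCounterexample, fun z hz ↦
    (differentiableAt_blochCounterexample (mem_ball_zero_iff.1 hz)).differentiableWithinAt,
    fun ε hε ↦ ?_, ?_⟩
  · set C := (1 + π) * Real.exp π ^ 2
    refine ⟨1 - Real.exp (-(C / ε ^ 2)), by linarith [Real.exp_pos (-(C / ε ^ 2))],
      fun z hz hδ ↦ ?_⟩
    have hz₁ := mem_ball_zero_iff.1 hz
    exact div_lt_of_sq_le_mul hε (by positivity) (lt_log_exp_one_div_one_sub_s15 hδ hz₁)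
      (sq_norm_blochCounterexample_le hz₁)
  · rintro ⟨M, hM⟩
    obtain ⟨n, hn⟩ := exists_nat_gt (M ^ 2)
    set v := ((n + 1 : ℕ) : ℝ) * (2 * π)
    have hnv : 2 * ((n : ℝ) + 1) ≤ v := by push_cast [v]; nlinarith [Real.pi_gt_three]
    have hsin : Real.sin v = 0 := by
      simpa [v, mul_left_comm, mul_assoc] using Real.sin_nat_mul_pi (2 * (n + 1))
    obtain ⟨z, hz, hle⟩ := exists_sqrt_le_mul_norm_deriv_blochCounterexample
      (by linarith [n.cast_nonneg (α := ℝ)]) hsin (Real.cos_nat_mul_two_pi (n + 1))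
    have : M < √v := (le_abs_self M).trans_lt <|
      (Real.lt_sqrt (abs_nonneg M)).2 (by rw [sq_abs]; linarith)
    linarith [hM z hz]
end
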